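/- For every q ≥ 0 one has L_{ξ,1}(q) = min{ L_{x_n}(q) : 0 ≤ n < s }, where x_n = (Q_n, P_n) are the convergent points of ξ. -/

import Mathlib

open Pointwise

/-- Distance from a real number to the nearest integer. -/
noncomputable def nearestInt (ξ : ℝ) : ℝ := sInf (Set.range fun m : ℤ => |ξ - (m : ℝ)|)

/-- The convex body `C_ξ(e^q) = {(x,y) : |x| ≤ e^q, |xξ - y| ≤ e^{-q}}`. -/
def body (ξ q : ℝ) : Set (ℝ × ℝ) :=
  {p : ℝ × ℝ | |p.1| ≤ Real.exp q ∧ |p.1 * ξ - p.2| ≤ Real.exp (-q)}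

/-- The `j`-th successive minimum of `C_ξ(e^q)` with respect to the lattice `ℤ²`:
the smallest `λ ≥ 0` such that `λ • C_ξ(e^q)` contains at least `j` linearly
independent points of `ℤ²`. -/
noncomputable def lam (ξ q : ℝ) (j : ℕ) : ℝ :=
  sInf {l : ℝ | 0 ≤ l ∧ ∃ v : Fin j → ℤ × ℤ,
    LinearIndependent ℝ (fun i => ((((v i).1 : ℝ)), (((v i).2 : ℝ)))) ∧
    ∀ i, ((((v i).1 : ℝ)), (((v i).2 : ℝ))) ∈ l • body ξ q}

/-- `L_{ξ,j}(q) = log λ_j(C_ξ(e^q))`. -/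
noncomputable def LL (ξ : ℝ) (j : ℕ) (q : ℝ) : ℝ := Real.log (lam ξ q j)

/-- `L_x(q)`: the logarithm of the smallest `λ ≥ 0` with `x ∈ λ • C_ξ(e^q)`, namely
`log (max (|Q| e^{-q}) (|Qξ - P| e^q))`, which equals
`max (log |Q| - q) (log |Qξ - P| + q)` (the first term being omitted when `Q = 0`,
the second when `Qξ - P = 0`). -/
noncomputable def Lx (ξ : ℝ) (x : ℤ × ℤ) (q : ℝ) : ℝ :=
  Real.log (max (|(x.1 : ℝ)| * Real.exp (-q)) (|(x.1 : ℝ) * ξ - (x.2 : ℝ)| * Real.exp q))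

/-- Data of a real number `ξ ∈ [0,1/2]` together with its simple continued fraction
expansion `ξ = [0; a 1, a 2, …]`, with partial quotients `a n ≥ 1` for `1 ≤ n < s`,
where `s ∈ ℕ* ∪ {∞}` (encoded in `WithTop ℤ`), `a (s-1) ≥ 2` if `2 ≤ s < ∞`
(`s = 1` meaning `ξ = 0`), and with `Q`, `P` the denominators and numerators of its
convergents, given by the standard recurrences with initial values
`P (-1) = Q 0 = 1`, `P 0 = Q (-1) = 0`.  The fact that `[0; a 1, a 2, …]` is indeed
the continued fraction expansion of `ξ` is recorded through the value conditions
`hfin` (if `s < ∞` then `ξ = P (s-1) / Q (s-1)`) and `hinf` (if `s = ∞` then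
`P n / Q n → ξ`), which, given the constraints on the `a n`, characterize it. -/
structure CFData where
  ξ : ℝ
  s : WithTop ℤ
  a : ℤ → ℤ
  Q : ℤ → ℤ
  P : ℤ → ℤ
  hξ0 : 0 ≤ ξ
  hξhalf : ξ ≤ 1 / 2
  hs : 1 ≤ s
  ha : ∀ n : ℤ, 1 ≤ n → (n : WithTop ℤ) < s → 1 ≤ a n
  halast : ∀ n : ℤ, 2 ≤ n → (n : WithTop ℤ) = s → 2 ≤ a (n - 1)
  hQ0 : Q 0 = 1
  hQneg : Q (-1) = 0
  hP0 : P 0 = 0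
  hPneg : P (-1) = 1
  hQrec : ∀ n : ℤ, 1 ≤ n → (n : WithTop ℤ) < s → Q n = Q (n - 2) + a n * Q (n - 1)
  hPrec : ∀ n : ℤ, 1 ≤ n → (n : WithTop ℤ) < s → P n = P (n - 2) + a n * P (n - 1)
  hfin : ∀ k : ℤ, (k : WithTop ℤ) = s → ξ = (P (k - 1) : ℝ) / (Q (k - 1) : ℝ)
  hinf : s = ⊤ → Filter.Tendsto (fun n : ℕ => (P (n : ℤ) : ℝ) / (Q (n : ℤ) : ℝ))
      Filter.atTop (nhds ξ)

namespace CFData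

/-- `Δ n = |Q n • ξ - P n|`. -/
noncomputable def Δ (c : CFData) (n : ℤ) : ℝ := |(c.Q n : ℝ) * c.ξ - (c.P n : ℝ)|

/-- `Q (n,t) = Q (n-2) + t * Q (n-1)`. -/
def Qt (c : CFData) (n t : ℤ) : ℤ := c.Q (n - 2) + t * c.Q (n - 1)

/-- `P (n,t) = P (n-2) + t * P (n-1)`. -/
def Pt (c : CFData) (n t : ℤ) : ℤ := c.P (n - 2) + t * c.P (n - 1)

/-- `Δ (n,t) = |Q (n,t) • ξ - P (n,t)|`. -/
noncomputable def Δt (c : CFData) (n t : ℤ) : ℝ := |(c.Qt n t : ℝ) * c.ξ - (c.Pt n t : ℝ)|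

/-- `q n = (log (Q n) - log (Δ (n-1))) / 2`; in particular `q 0 = 0`. -/
noncomputable def qcrit (c : CFData) (n : ℤ) : ℝ :=
  (Real.log (c.Q n : ℝ) - Real.log (c.Δ (n - 1))) / 2

end CFData

open Real

/-!
The gauge of `C_ξ(e^q)` at `x = (Q, P)` is `max (|Q| e^{-q}) (|Qξ - P| e^q)`, so `λ₁` is the
minimum of this gauge over the nonzero lattice points. Convergents are best approximations
(Lagrange): if `Q_n ≤ |Q| < Q_{n+1}`, write `(Q, P) = u x_n + v x_{n+1}` with `u, v ∈ ℤ` (the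
matrix of two consecutive convergents is unimodular); then `u ≠ 0`, `uv ≤ 0`, and since the errors
`Q_n ξ - P_n` alternate in sign, `|Qξ - P| ≥ |Q_n ξ - P_n|`. Hence the gauge of any nonzero
lattice point dominates that of some convergent, and the minimum over convergents is attained
because `Q_n → ∞`. The sign alternation itself comes from `P_n / Q_n → ξ`: were two consecutive
errors of the same sign, the recurrence would propagate `|Q_m ξ - P_m| ≥ ρ Q_m` to all `m`.
-/

lemma abs_le_abs_add_of_mul_nonneg {α : Type*} [CommRing α] [LinearOrder α]
    [IsStrictOrderedRing α] {a b : α} (h : 0 ≤ a * b) : |a| ≤ |a + b| := by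
  rw [(abs_add_eq_add_abs_iff a b).2 (mul_nonneg_iff.1 h)]
  exact le_add_of_nonneg_right (abs_nonneg b)

noncomputable def bodyGauge (ξ q : ℝ) (x : ℤ × ℤ) : ℝ :=
  max (|(x.1 : ℝ)| * exp (-q)) (|(x.1 : ℝ) * ξ - x.2| * exp q)

lemma bodyGauge_pos (ξ q : ℝ) {x : ℤ × ℤ} (hx : x ≠ 0) : 0 < bodyGauge ξ q x := by
  by_cases hx1 : x.1 = 0
  · have hx2 : x.2 ≠ 0 := fun h => hx (Prod.ext hx1 h)
    refine lt_max_of_lt_right (mul_pos (abs_pos.2 ?_) (exp_pos q))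
    simpa [hx1] using hx2
  · exact lt_max_of_lt_left (mul_pos (abs_pos.2 (by exact_mod_cast hx1)) (exp_pos _))

lemma mem_smul_body_iff {ξ q l : ℝ} (hl : 0 < l) (x : ℤ × ℤ) :
    ((x.1 : ℝ), (x.2 : ℝ)) ∈ l • body ξ q ↔ bodyGauge ξ q x ≤ l := by
  rw [Set.mem_smul_set_iff_inv_smul_mem₀ hl.ne']
  change |l⁻¹ * x.1| ≤ exp q ∧ |l⁻¹ * x.1 * ξ - l⁻¹ * x.2| ≤ exp (-q) ↔ _
  rw [mul_assoc, ← mul_sub, abs_mul, abs_mul, abs_inv, abs_of_pos hl, inv_mul_le_iff₀ hl,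
    inv_mul_le_iff₀ hl, bodyGauge, max_le_iff, exp_neg, mul_inv_le_iff₀ (exp_pos q),
    le_mul_inv_iff₀ (exp_pos q)]

lemma lam_one_eq_of_isLeast {ξ q m : ℝ}
    (hm : IsLeast {t | ∃ x : ℤ × ℤ, x ≠ 0 ∧ bodyGauge ξ q x = t} m) : lam ξ q 1 = m := by
  obtain ⟨⟨x₀, hx₀, rfl⟩, hlow⟩ := hm
  have hpos := bodyGauge_pos ξ q hx₀
  refine IsLeast.csInf_eq
    ⟨⟨hpos.le, fun _ => x₀, ?_, fun _ => (mem_smul_body_iff hpos x₀).2 le_rfl⟩, ?_⟩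
  · rw [linearIndependent_unique_iff]
    simpa [Prod.ext_iff] using hx₀
  · rintro l ⟨hl0, v, hli, hv⟩
    have hv0 : (((v 0).1 : ℝ), ((v 0).2 : ℝ)) ≠ 0 := linearIndependent_unique_iff.1 hli
    have hvz : v 0 ≠ 0 := by rintro h; simp [h] at hv0
    rcases hl0.eq_or_lt with rfl | hl
    · have hne : (body ξ q).Nonempty := ⟨0, by simp [body, (exp_pos _).le]⟩
      have h0 := hv 0
      rw [Set.zero_smul_set hne] at h0
      exact absurd h0 hv0
    · exact (hlow ⟨v 0, hvz, rfl⟩).trans ((mem_smul_body_iff hl _).1 (hv 0))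

namespace CFData

variable (c : CFData)

lemma coe_lt_s_of_le {m n : ℤ} (hmn : m ≤ n) (hn : (n : WithTop ℤ) < c.s) :
    (m : WithTop ℤ) < c.s :=
  lt_of_le_of_lt (WithTop.coe_le_coe.2 hmn) hn

lemma zero_lt_s : ((0 : ℤ) : WithTop ℤ) < c.s :=
  lt_of_lt_of_le (WithTop.coe_lt_coe.2 zero_lt_one) c.hs

lemma s_eq_of_not_succ_lt {n : ℤ} (hn : (n : WithTop ℤ) < c.s)
    (hlast : ¬((n + 1 : ℤ) : WithTop ℤ) < c.s) : c.s = ((n + 1 : ℤ) : WithTop ℤ) := by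
  obtain ⟨k, hk⟩ := WithTop.ne_top_iff_exists.1
    (ne_top_of_le_ne_top WithTop.coe_ne_top (not_lt.1 hlast))
  rw [← hk] at hn hlast ⊢
  have h1 : n < k := WithTop.coe_lt_coe.1 hn
  have h2 : ¬n + 1 < k := fun h => hlast (WithTop.coe_lt_coe.2 h)
  rw [show k = n + 1 by omega]

lemma Q_add_two {m : ℤ} (hm : -1 ≤ m) (h : ((m + 2 : ℤ) : WithTop ℤ) < c.s) :
    c.Q (m + 2) = c.Q m + c.a (m + 2) * c.Q (m + 1) := by
  have := c.hQrec (m + 2) (by omega) h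
  rwa [show m + 2 - 2 = m by ring, show m + 2 - 1 = m + 1 by ring] at this

lemma P_add_two {m : ℤ} (hm : -1 ≤ m) (h : ((m + 2 : ℤ) : WithTop ℤ) < c.s) :
    c.P (m + 2) = c.P m + c.a (m + 2) * c.P (m + 1) := by
  have := c.hPrec (m + 2) (by omega) h
  rwa [show m + 2 - 2 = m by ring, show m + 2 - 1 = m + 1 by ring] at this

lemma Q_growth {m : ℤ} (hm : -1 ≤ m) (h : ((m + 1 : ℤ) : WithTop ℤ) < c.s) :
    0 ≤ c.Q m ∧ c.Q m ≤ c.Q (m + 1) ∧ m + 2 ≤ c.Q m + c.Q (m + 1) := by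
  induction m, hm using Int.leInduction with
  | base => simp [c.hQneg, c.hQ0]
  | succ m hm ih =>
    obtain ⟨h0, h1, h2⟩ := ih (c.coe_lt_s_of_le (by omega) h)
    have hrec := c.Q_add_two hm (by simpa [add_assoc] using h)
    have ha := c.ha (m + 2) (by omega) (by simpa [add_assoc] using h)
    have : c.Q (m + 1) ≤ c.a (m + 2) * c.Q (m + 1) := le_mul_of_one_le_left (by omega) ha
    rw [show m + 1 + 1 = m + 2 by ring, hrec]
    omega

lemma succ_le_two_mul_Q {n : ℤ} (hn : 0 ≤ n) (hns : (n : WithTop ℤ) < c.s) :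
    n + 1 ≤ 2 * c.Q n := by
  have := c.Q_growth (m := n - 1) (by omega) (by simpa using hns)
  simp only [sub_add_cancel] at this
  omega

lemma one_le_Q {n : ℤ} (hn : 0 ≤ n) (hns : (n : WithTop ℤ) < c.s) : 1 ≤ c.Q n := by
  have := c.succ_le_two_mul_Q hn hns
  omega

lemma det_sq {m : ℤ} (hm : -1 ≤ m) (h : ((m + 1 : ℤ) : WithTop ℤ) < c.s) :
    (c.Q m * c.P (m + 1) - c.Q (m + 1) * c.P m) ^ 2 = 1 := by
  induction m, hm using Int.leInduction with
  | base => simp [c.hQneg, c.hQ0, c.hPneg, c.hP0]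
  | succ m hm ih =>
    have h' : ((m + 2 : ℤ) : WithTop ℤ) < c.s := by simpa [add_assoc] using h
    rw [show m + 1 + 1 = m + 2 by ring, c.Q_add_two hm h', c.P_add_two hm h']
    linear_combination ih (c.coe_lt_s_of_le (by omega) h)

lemma exists_eq_convergent_combination {m : ℤ} (hm : -1 ≤ m)
    (h : ((m + 1 : ℤ) : WithTop ℤ) < c.s) (x : ℤ × ℤ) :
    ∃ u v : ℤ, x.1 = u * c.Q m + v * c.Q (m + 1) ∧ x.2 = u * c.P m + v * c.P (m + 1) := by
  set D := c.Q m * c.P (m + 1) - c.Q (m + 1) * c.P m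
  have hD : D ^ 2 = 1 := c.det_sq hm h
  exact ⟨D * (x.1 * c.P (m + 1) - x.2 * c.Q (m + 1)), D * (x.2 * c.Q m - x.1 * c.P m),
    by linear_combination -x.1 * hD, by linear_combination -x.2 * hD⟩

noncomputable def err (n : ℤ) : ℝ := c.Q n * c.ξ - c.P n

lemma err_add_two {m : ℤ} (hm : -1 ≤ m) (h : ((m + 2 : ℤ) : WithTop ℤ) < c.s) :
    c.err (m + 2) = c.err m + c.a (m + 2) * c.err (m + 1) := by
  simp only [err, c.Q_add_two hm h, c.P_add_two hm h]
  push_cast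
  ring

lemma err_eq_zero_of_not_succ_lt {n : ℤ} (hn : 0 ≤ n) (hns : (n : WithTop ℤ) < c.s)
    (hlast : ¬((n + 1 : ℤ) : WithTop ℤ) < c.s) : c.err n = 0 := by
  have hξ := c.hfin (n + 1) (c.s_eq_of_not_succ_lt hns hlast).symm
  have hQ : (c.Q n : ℝ) ≠ 0 := by
    exact_mod_cast (show c.Q n ≠ 0 by have := c.one_le_Q hn hns; omega)
  rw [add_sub_cancel_right] at hξ
  rw [err, hξ, mul_div_cancel₀ _ hQ, sub_self]

lemma nonneg_of_recurrence {f : ℤ → ℝ} {n : ℤ} (hn : 0 ≤ n)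
    (hf : ∀ m, n ≤ m → ((m + 2 : ℤ) : WithTop ℤ) < c.s →
      f (m + 2) = f m + c.a (m + 2) * f (m + 1))
    (h₀ : 0 ≤ f n) (h₁ : 0 ≤ f (n + 1)) {m : ℤ} (hnm : n ≤ m) (hms : (m : WithTop ℤ) < c.s) :
    0 ≤ f m := by
  suffices ((m : WithTop ℤ) < c.s → 0 ≤ f m) ∧
      (((m + 1 : ℤ) : WithTop ℤ) < c.s → 0 ≤ f (m + 1)) from this.1 hms
  clear hms
  induction m, hnm using Int.leInduction with
  | base => exact ⟨fun _ => h₀, fun _ => h₁⟩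
  | succ m hnm ih =>
    refine ⟨ih.2, fun h => ?_⟩
    have h' : ((m + 2 : ℤ) : WithTop ℤ) < c.s := by simpa [add_assoc] using h
    have ha : (1 : ℝ) ≤ c.a (m + 2) := by exact_mod_cast c.ha (m + 2) (by omega) h'
    rw [show m + 1 + 1 = m + 2 by ring, hf m hnm h']
    have := ih.1 (c.coe_lt_s_of_le (by omega) h')
    have := ih.2 (c.coe_lt_s_of_le (by omega) h')
    positivity

lemma exists_abs_err_lt {n : ℤ} (hn : 0 ≤ n) (hns : (n : WithTop ℤ) < c.s) {ρ : ℝ}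
    (hρ : 0 < ρ) :
    ∃ m, n ≤ m ∧ (m : WithTop ℤ) < c.s ∧ |c.err m| < ρ * c.Q m := by
  by_cases hs : c.s = ⊤
  · obtain ⟨N, hN⟩ := Metric.tendsto_atTop.1 (c.hinf hs) ρ hρ
    refine ⟨max N n.toNat, by omega, by simp [hs], ?_⟩
    have hQ : (0 : ℝ) < c.Q (max N n.toNat : ℕ) := by
      exact_mod_cast c.one_le_Q (by omega) (by simp [hs])
    have := hN _ (le_max_left N n.toNat)
    rw [Real.dist_eq, div_sub' hQ.ne', abs_div, abs_of_pos hQ, div_lt_iff₀ hQ,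
      abs_sub_comm] at this
    simpa [err, mul_comm] using this
  · obtain ⟨k, hk⟩ := WithTop.ne_top_iff_exists.1 hs
    have hnk : n < k := by rw [← hk] at hns; exact_mod_cast hns
    have hlast : ¬((k - 1 + 1 : ℤ) : WithTop ℤ) < c.s := by simp [← hk]
    have hks : ((k - 1 : ℤ) : WithTop ℤ) < c.s := by rw [← hk]; exact_mod_cast sub_one_lt k
    refine ⟨k - 1, by omega, hks, ?_⟩
    rw [c.err_eq_zero_of_not_succ_lt (by omega) hks hlast, abs_zero]
    exact mul_pos hρ (by exact_mod_cast c.one_le_Q (by omega) hks)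

lemma err_mul_err_succ_nonpos {n : ℤ} (hn : 0 ≤ n) (h : ((n + 1 : ℤ) : WithTop ℤ) < c.s) :
    c.err n * c.err (n + 1) ≤ 0 := by
  by_contra! hpos
  have hns := c.coe_lt_s_of_le (m := n) (by omega) h
  have hQ₀ : (0 : ℝ) < c.Q n := by exact_mod_cast c.one_le_Q hn hns
  have hQ₁ : (0 : ℝ) < c.Q (n + 1) := by exact_mod_cast c.one_le_Q (by omega) h
  have hne : c.err n ≠ 0 := left_ne_zero_of_mul hpos.ne'
  set ρ := min (c.err n * c.err n / c.Q n) (c.err n * c.err (n + 1) / c.Q (n + 1))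
  have hρ : 0 < ρ := lt_min (div_pos (mul_self_pos.2 hne) hQ₀) (div_pos hpos hQ₁)
  -- `m ↦ err n * err m - ρ Q m` satisfies the convergent recurrence and is `≥ 0` at `n, n + 1`
  have hlow : ∀ m, n ≤ m → (m : WithTop ℤ) < c.s → 0 ≤ c.err n * c.err m - ρ * c.Q m :=
    fun m hnm hms => c.nonneg_of_recurrence (f := fun m => c.err n * c.err m - ρ * c.Q m) hn
      (fun m hnm h => by
        rw [c.err_add_two (by omega) h, c.Q_add_two (by omega) h]
        push_cast
        ring)
      (by rw [sub_nonneg, ← le_div_iff₀ hQ₀]; exact min_le_left _ _)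
      (by rw [sub_nonneg, ← le_div_iff₀ hQ₁]; exact min_le_right _ _) hnm hms
  obtain ⟨m, hnm, hms, hsmall⟩ := c.exists_abs_err_lt hn hns (div_pos hρ (abs_pos.2 hne))
  rw [div_mul_eq_mul_div, lt_div_iff₀' (abs_pos.2 hne), ← abs_mul] at hsmall
  linarith [hlow m hnm hms, le_abs_self (c.err n * c.err m)]

lemma abs_err_le_of_abs_lt_Q_succ {n : ℤ} (hn : 0 ≤ n) (h : ((n + 1 : ℤ) : WithTop ℤ) < c.s)
    {x : ℤ × ℤ} (hx : x ≠ 0) (hQx : |x.1| < c.Q (n + 1)) :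
    |c.err n| ≤ |(x.1 : ℝ) * c.ξ - x.2| := by
  obtain ⟨u, v, hQ, hP⟩ := c.exists_eq_convergent_combination (by omega) h x
  have hQ₀ : 0 ≤ c.Q n := by
    have := c.one_le_Q hn (c.coe_lt_s_of_le (m := n) (by omega) h)
    omega
  have hQ₁ : 1 ≤ c.Q (n + 1) := c.one_le_Q (by omega) h
  have hu : u ≠ 0 := by
    rintro rfl
    have hv : v ≠ 0 := by rintro rfl; exact hx (Prod.ext (by simpa using hQ) (by simpa using hP))
    rw [hQ, zero_mul, zero_add, abs_mul, abs_of_pos (by omega : (0 : ℤ) < c.Q (n + 1))] at hQx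
    nlinarith [Int.one_le_abs hv]
  -- otherwise `|x.1| = |u| Q n + |v| Q (n + 1) ≥ Q (n + 1)`
  have huv : u * v ≤ 0 := by
    by_contra! huv
    rcases mul_pos_iff.1 huv with ⟨hu, hv⟩ | ⟨hu, hv⟩
    · rw [hQ, abs_of_pos (by nlinarith)] at hQx; nlinarith
    · rw [hQ, abs_of_neg (by nlinarith)] at hQx; nlinarith
  have herr : (x.1 : ℝ) * c.ξ - x.2 = u * c.err n + v * c.err (n + 1) := by
    rw [hQ, hP]; push_cast; simp only [err]; ring
  have hsame : 0 ≤ (u * c.err n) * (v * c.err (n + 1)) := by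
    have huvR : (u : ℝ) * v ≤ 0 := by exact_mod_cast huv
    nlinarith [c.err_mul_err_succ_nonpos hn h]
  calc |c.err n| ≤ |(u : ℝ)| * |c.err n| :=
        le_mul_of_one_le_left (abs_nonneg _) (by exact_mod_cast Int.one_le_abs hu)
    _ = |u * c.err n| := (abs_mul _ _).symm
    _ ≤ _ := herr ▸ abs_le_abs_add_of_mul_nonneg hsame

lemma bodyGauge_convergent (q : ℝ) (n : ℤ) :
    bodyGauge c.ξ q (c.Q n, c.P n) = max (|(c.Q n : ℝ)| * exp (-q)) (|c.err n| * exp q) := rfl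

lemma exists_bodyGauge_convergent_le {q : ℝ} (hq : 0 ≤ q) {x : ℤ × ℤ} (hx : x ≠ 0) :
    ∃ n : ℤ, 0 ≤ n ∧ (n : WithTop ℤ) < c.s ∧
      bodyGauge c.ξ q (c.Q n, c.P n) ≤ bodyGauge c.ξ q x := by
  by_cases hx₁ : x.1 = 0
  · have hx₂ : (1 : ℝ) ≤ |(x.2 : ℝ)| := by
      exact_mod_cast Int.one_le_abs fun h => hx (Prod.ext hx₁ h)
    refine ⟨0, le_rfl, c.zero_lt_s, ?_⟩
    rw [bodyGauge_convergent, bodyGauge, hx₁]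
    simp only [err, c.hQ0, c.hP0, Int.cast_one, Int.cast_zero, abs_one, one_mul, sub_zero,
      zero_mul, zero_sub, abs_neg, abs_of_nonneg c.hξ0]
    refine le_max_of_le_right (max_le ?_ ?_)
    · exact (exp_le_exp.2 (by linarith)).trans (le_mul_of_one_le_left (exp_pos q).le hx₂)
    · exact mul_le_mul_of_nonneg_right (by linarith [c.hξhalf]) (exp_pos q).le
  · obtain ⟨n, ⟨hn, hns, hnx⟩, hmax⟩ := Int.exists_greatest_of_bdd
      (P := fun n => 0 ≤ n ∧ (n : WithTop ℤ) < c.s ∧ c.Q n ≤ |x.1|)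
      ⟨2 * |x.1|, fun n ⟨hn, hns, hnx⟩ => by have := c.succ_le_two_mul_Q hn hns; omega⟩
      ⟨0, le_rfl, c.zero_lt_s, by rw [c.hQ0]; exact Int.one_le_abs hx₁⟩
    have herr : |c.err n| ≤ |(x.1 : ℝ) * c.ξ - x.2| := by
      by_cases h : ((n + 1 : ℤ) : WithTop ℤ) < c.s
      · refine c.abs_err_le_of_abs_lt_Q_succ hn h hx (not_le.1 fun hle => ?_)
        have := hmax (n + 1) ⟨by omega, h, hle⟩
        omega
      · rw [c.err_eq_zero_of_not_succ_lt hn hns h, abs_zero]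
        exact abs_nonneg _
    refine ⟨n, hn, hns, max_le_max ?_ (mul_le_mul_of_nonneg_right herr (exp_pos q).le)⟩
    refine mul_le_mul_of_nonneg_right ?_ (exp_pos _).le
    exact_mod_cast (abs_of_pos (by have := c.one_le_Q hn hns; omega : 0 < c.Q n)).trans_le hnx

lemma exists_bodyGauge_convergent_min (q : ℝ) :
    ∃ n₀ : ℤ, 0 ≤ n₀ ∧ (n₀ : WithTop ℤ) < c.s ∧ ∀ n : ℤ, 0 ≤ n → (n : WithTop ℤ) < c.s →
      bodyGauge c.ξ q (c.Q n₀, c.P n₀) ≤ bodyGauge c.ξ q (c.Q n, c.P n) := by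
  classical
  obtain ⟨N, hN⟩ := exists_nat_gt (2 * bodyGauge c.ξ q (c.Q 0, c.P 0) * exp q)
  let T := (Finset.Icc 0 (N : ℤ)).filter fun n : ℤ => (n : WithTop ℤ) < c.s
  obtain ⟨n₀, hn₀, hmin⟩ := T.exists_min_image (fun n : ℤ => bodyGauge c.ξ q (c.Q n, c.P n))
    ⟨0, Finset.mem_filter.2 ⟨by simp, c.zero_lt_s⟩⟩
  simp only [T, Finset.mem_filter, Finset.mem_Icc] at hn₀ hmin
  refine ⟨n₀, hn₀.1.1, hn₀.2, fun n hn hns => ?_⟩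
  by_cases hnN : n ≤ N
  · exact hmin n ⟨⟨hn, hnN⟩, hns⟩
  -- for `n > N`, already `Q n e^{-q}` exceeds the gauge of `x₀`
  refine (hmin 0 ⟨⟨le_rfl, by omega⟩, c.zero_lt_s⟩).trans (le_max_of_le_left ?_)
  have hQ : (N : ℝ) + 1 ≤ 2 * c.Q n := by
    exact_mod_cast (by have := c.succ_le_two_mul_Q hn hns; omega)
  rw [abs_of_pos (by linarith), exp_neg, ← div_eq_mul_inv, le_div_iff₀ (exp_pos q)]
  linarith

end CFData

theorem stmt12 (c : CFData) (q : ℝ) (hq : 0 ≤ q) :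
    IsLeast {v : ℝ | ∃ n : ℤ, 0 ≤ n ∧ (n : WithTop ℤ) < c.s ∧
      v = Lx c.ξ (c.Q n, c.P n) q} (LL c.ξ 1 q) := by
  obtain ⟨n₀, hn₀, hn₀s, hmin⟩ := c.exists_bodyGauge_convergent_min q
  have hx₀ : (c.Q n₀, c.P n₀) ≠ 0 := fun h => by
    have := c.one_le_Q hn₀ hn₀s
    simp only [Prod.mk_eq_zero] at h
    omega
  have hlam : lam c.ξ q 1 = bodyGauge c.ξ q (c.Q n₀, c.P n₀) := by
    refine lam_one_eq_of_isLeast ⟨⟨_, hx₀, rfl⟩, ?_⟩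
    rintro _ ⟨x, hx, rfl⟩
    obtain ⟨n, hn, hns, hle⟩ := c.exists_bodyGauge_convergent_le hq hx
    exact (hmin n hn hns).trans hle
  refine ⟨⟨n₀, hn₀, hn₀s, by rw [LL, hlam]; rfl⟩, ?_⟩
  rintro _ ⟨n, hn, hns, rfl⟩
  rw [LL, hlam]
  exact log_le_log (bodyGauge_pos _ _ hx₀) (hmin n hn hns)
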